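/- arXiv:2411.13277 — 4 statements merged into one kernel-verified Lean document; each statement's English description precedes it below -/
import Mathlib

section
/- Let H be a separable real Hilbert space and let F : H → H be a continuous map that is Fréchet differentiable at every point of H, and assume: (i) the range of F is contained in a finite-dimensional subspace of H; (ii) the range of F is a bounded subset of H; (iii) for every u ∈ H, no real eigenvalue of the Fréchet derivative DF(u) (a bounded linear operator on H) lies in the interval (-∞, -1]. Then the map f : H → H defined by f(u) = u + F(u) is bijective. -/
/-!
Fix a base point `c`. Since `F` takes values in a finite-dimensional subspace `S`, solving
`u + F u = y` with `u = c + s` is a problem for `g s = s + P F (c + s)` on `S`, where `P` is the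
orthogonal projection; `G = P F (c + ·)` is bounded, and the eigenvalue condition says exactly that
`id + t DG` is injective, hence invertible, for every `t ∈ [0, 1]`.

Surjectivity: minimise `‖g s - y‖²` over a large ball. Boundedness of `G` keeps the minimiser off
the boundary, and an interior critical point of `‖g - y‖²` with surjective `Dg` is a zero of
`g - y`.

Injectivity: if `g x = g x₀` with `x ≠ x₀`, follow the homotopy `z + t G z = x₀ + t G x₀`. Its
solutions other than `x₀` stay uniformly away from `x₀` (uniform invertibility of `id + t DG x₀`),
so there is a least `t₁ > 0` having one; by the minimum principle above, such a solution survives a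
small decrease of `t`, contradicting minimality.
-/

open Function Metric Set

theorem ContinuousLinearMap.injective_id_add_smul {E : Type*} [NormedAddCommGroup E]
    [NormedSpace ℝ E] (T : E →L[ℝ] E)
    (hT : ∀ lam : ℝ, lam ≤ -1 → ∀ v : E, v ≠ 0 → T v ≠ lam • v) {t : ℝ}
    (ht : t ∈ Icc (0 : ℝ) 1) : Injective (ContinuousLinearMap.id ℝ E + t • T) := by
  refine (injective_iff_map_eq_zero _).2 fun w hw => ?_
  by_contra hw0
  have ht0 : t ≠ 0 := by
    rintro rfl
    exact hw0 (by simpa using hw)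
  refine hT (-t⁻¹) ?_ w hw0 ?_
  · linarith [one_le_inv₀ (lt_of_le_of_ne ht.1 (Ne.symm ht0)) |>.2 ht.2]
  · have hw' : w + t • T w = 0 := by simpa using hw
    rw [neg_smul, eq_neg_iff_add_eq_zero, ← smul_eq_zero_iff_right ht0, smul_add, smul_smul,
      mul_inv_cancel₀ ht0, one_smul, add_comm, hw']

theorem IsCompact.exists_pos_mul_norm_le_norm_apply {α E F : Type*} [TopologicalSpace α]
    [NormedAddCommGroup E] [NormedSpace ℝ E] [ProperSpace E] [NormedAddCommGroup F]
    [NormedSpace ℝ F] {K : Set α} (hK : IsCompact K) {L : α → E →L[ℝ] F}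
    (hL : ContinuousOn L K) (hinj : ∀ a ∈ K, Injective (L a)) :
    ∃ c > 0, ∀ a ∈ K, ∀ w, c * ‖w‖ ≤ ‖L a w‖ := by
  have hcont : ContinuousOn (fun p : α × E => ‖L p.1 p.2‖) (K ×ˢ sphere 0 1) :=
    ((hL.comp continuousOn_fst fun _ hp => hp.1).clm_apply continuousOn_snd).norm
  obtain ⟨c, hc, hcK⟩ := (hK.prod (isCompact_sphere 0 1)).exists_forall_le' hcont
    (a := 0) fun p hp => norm_pos_iff.2 fun h =>
      ne_of_mem_sphere hp.2 one_ne_zero (hinj p.1 hp.1 (h.trans (map_zero _).symm))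
  refine ⟨c, hc, fun a ha w => ?_⟩
  rcases eq_or_ne w 0 with rfl | hw
  · simp
  have hw' : 0 < ‖w‖ := norm_pos_iff.2 hw
  have := hcK (a, ‖w‖⁻¹ • w) ⟨ha, by simp [norm_smul, hw'.ne']⟩
  rw [map_smul, norm_smul, norm_inv, norm_norm, le_inv_mul_iff₀ hw'] at this
  linarith

theorem HasFDerivAt.exists_pos_mul_norm_sub_le {E : Type*} [NormedAddCommGroup E]
    [NormedSpace ℝ E] [ProperSpace E] {G : E → E} {G' : E →L[ℝ] E} {x : E}
    (hG : HasFDerivAt G G' x)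
    (hinj : ∀ t ∈ Icc (0 : ℝ) 1, Injective (ContinuousLinearMap.id ℝ E + t • G')) :
    ∃ c > 0, ∃ δ > 0, ∀ t ∈ Icc (0 : ℝ) 1, ∀ z, ‖z - x‖ < δ →
      c * ‖z - x‖ ≤ ‖(z + t • G z) - (x + t • G x)‖ := by
  obtain ⟨c, hc, hlin⟩ := isCompact_Icc.exists_pos_mul_norm_le_norm_apply
    (L := fun t : ℝ => ContinuousLinearMap.id ℝ E + t • G') (by fun_prop) hinj
  obtain ⟨δ, hδ, hrem⟩ := Metric.eventually_nhds_iff.1 (hG.isLittleO.def (half_pos hc))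
  refine ⟨c / 2, half_pos hc, δ, hδ, fun t ht z hz => ?_⟩
  have hsplit : (z + t • G z) - (x + t • G x) =
      (ContinuousLinearMap.id ℝ E + t • G') (z - x) + t • (G z - G x - G' (z - x)) := by
    simp only [add_apply, ContinuousLinearMap.id_apply, smul_apply]
    module
  have hsmall : ‖t • (G z - G x - G' (z - x))‖ ≤ c / 2 * ‖z - x‖ := by
    rw [norm_smul, Real.norm_of_nonneg ht.1]
    exact (mul_le_of_le_one_left (norm_nonneg _) ht.2).trans (hrem (by rwa [dist_eq_norm]))
  rw [hsplit]
  linarith [hlin t ht (z - x),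
    norm_sub_le_norm_add ((ContinuousLinearMap.id ℝ E + t • G') (z - x))
      (t • (G z - G x - G' (z - x)))]

theorem exists_mem_ball_eq_of_norm_lt_on_sphere {E F : Type*} [NormedAddCommGroup E]
    [NormedSpace ℝ E] [ProperSpace E] [NormedAddCommGroup F] [InnerProductSpace ℝ F]
    {g : E → F} {Dg : E → E →L[ℝ] F} (hg : ∀ x, HasFDerivAt g (Dg x) x)
    (hsurj : ∀ x, Surjective (Dg x)) {x₀ : E} {ρ : ℝ} (hρ : 0 ≤ ρ) {y : F}
    (hsphere : ∀ z ∈ sphere x₀ ρ, ‖g x₀ - y‖ < ‖g z - y‖) : ∃ z ∈ ball x₀ ρ, g z = y := by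
  have hgc : Continuous g := continuous_iff_continuousAt.2 fun x => (hg x).continuousAt
  obtain ⟨z, hzB, hmin⟩ := (isCompact_closedBall x₀ ρ).exists_isMinOn (nonempty_closedBall.2 hρ)
    (f := fun w => ‖g w - y‖ ^ 2) (by fun_prop)
  have hz : z ∈ ball x₀ ρ := by
    refine lt_of_le_of_ne (mem_closedBall.1 hzB) fun h => ?_
    have := isMinOn_iff.1 hmin x₀ (mem_closedBall_self hρ)
    have := hsphere z h
    nlinarith [norm_nonneg (g x₀ - y)]
  have hzero := (hmin.isLocalMin (closedBall_mem_nhds_of_mem hz)).hasFDerivAt_eq_zero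
    ((hg z).sub_const y).norm_sq
  obtain ⟨w, hw⟩ := hsurj z (g z - y)
  have := congrArg (· w) hzero
  simp only [smul_apply, ContinuousLinearMap.comp_apply, hw, innerSL_apply_apply,
    real_inner_self_eq_norm_sq, zero_apply] at this
  exact ⟨z, hz, sub_eq_zero.1 (by simpa using this)⟩

section FiniteDimensional

variable {E : Type*} [NormedAddCommGroup E] [InnerProductSpace ℝ E]
  {G : E → E} {DG : E → E →L[ℝ] E} {M : ℝ}

theorem norm_sub_le_of_add_smul_eq (hM : ∀ x, ‖G x‖ ≤ M) {t : ℝ} (ht : t ∈ Icc (0 : ℝ) 1)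
    {x₀ z : E} (hz : z + t • G z = x₀ + t • G x₀) : ‖z - x₀‖ ≤ 2 * M := by
  have : z - x₀ = t • (G x₀ - G z) := by
    rw [smul_sub]
    linear_combination (norm := module) hz
  rw [this, norm_smul, Real.norm_of_nonneg ht.1]
  refine (mul_le_of_le_one_left (norm_nonneg _) ht.2).trans ?_
  linarith [norm_sub_le (G x₀) (G z), hM x₀, hM z]

variable [FiniteDimensional ℝ E] (hG : ∀ x, HasFDerivAt G (DG x) x) (hM : ∀ x, ‖G x‖ ≤ M)
  (hinj : ∀ x, ∀ t ∈ Icc (0 : ℝ) 1, Injective (ContinuousLinearMap.id ℝ E + t • DG x))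
include hG hM hinj

/-- `z ↦ z + t₁ • G z` moves a small sphere around `z₁` uniformly away from its centre, and
replacing `t₁` by `t` perturbs it by at most `2 M |t - t₁|`. -/
theorem exists_lt_add_smul_eq {t₁ : ℝ} (ht₁ : t₁ ∈ Ioc (0 : ℝ) 1) {x₀ z₁ : E}
    (hz₁ : z₁ + t₁ • G z₁ = x₀ + t₁ • G x₀) {ε : ℝ} (hε : 0 < ε) :
    ∃ t ∈ Ico 0 t₁, ∃ z ∈ ball z₁ ε, z + t • G z = x₀ + t • G x₀ := by
  obtain ⟨c, hc, δ, hδ, hiso⟩ := (hG z₁).exists_pos_mul_norm_sub_le (hinj z₁)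
  have hM0 : 0 ≤ M := (norm_nonneg _).trans (hM 0)
  set ρ := min (δ / 2) ε
  have hρ : 0 < ρ := lt_min (half_pos hδ) hε
  have hρδ : ρ ≤ δ / 2 := min_le_left _ _
  set Δ := min t₁ (c * ρ / (4 * M + 1))
  have hΔ : 0 < Δ := lt_min ht₁.1 (by positivity)
  have hΔt₁ : Δ ≤ t₁ := min_le_left _ _
  have hΔκ : 4 * M * Δ < c * ρ := by
    have := (le_div_iff₀ (by linarith : (0 : ℝ) < 4 * M + 1)).1
      (min_le_right t₁ (c * ρ / (4 * M + 1)))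
    nlinarith
  have hperturb : ∀ z, ‖(z + (t₁ - Δ) • G z - (x₀ + (t₁ - Δ) • G x₀))
      - (z + t₁ • G z - (z₁ + t₁ • G z₁))‖ ≤ 2 * M * Δ := by
    intro z
    have : (z + (t₁ - Δ) • G z - (x₀ + (t₁ - Δ) • G x₀)) - (z + t₁ • G z - (z₁ + t₁ • G z₁))
        = Δ • (G x₀ - G z) := by
      rw [hz₁]; module
    rw [this, norm_smul, Real.norm_of_nonneg hΔ.le]
    nlinarith [norm_sub_le (G x₀) (G z), hM x₀, hM z]
  obtain ⟨z, hz, heq⟩ :=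
    exists_mem_ball_eq_of_norm_lt_on_sphere (g := fun z => z + (t₁ - Δ) • G z)
    (fun z => (hasFDerivAt_id z).add ((hG z).const_smul (t₁ - Δ)))
    (fun z => LinearMap.injective_iff_surjective.1 (hinj z _ ⟨by linarith, by linarith [ht₁.2]⟩))
    hρ.le (y := x₀ + (t₁ - Δ) • G x₀) fun z hz => by
      have hzρ : ‖z - z₁‖ = ρ := mem_sphere_iff_norm.1 hz
      have hfar := hiso t₁ ⟨ht₁.1.le, ht₁.2⟩ z (by linarith)
      have hcentre := hperturb z₁
      rw [sub_self, sub_zero] at hcentre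
      rw [hzρ] at hfar
      linarith [norm_sub_norm_le (z + t₁ • G z - (z₁ + t₁ • G z₁))
        (z + (t₁ - Δ) • G z - (x₀ + (t₁ - Δ) • G x₀)), hperturb z, norm_sub_rev
        (z + t₁ • G z - (z₁ + t₁ • G z₁)) (z + (t₁ - Δ) • G z - (x₀ + (t₁ - Δ) • G x₀))]
  exact ⟨t₁ - Δ, ⟨by linarith, by linarith⟩, z,
    ball_subset_ball (min_le_right _ _) hz, heq⟩

theorem injective_id_add_of_bounded : Injective fun x => x + G x := by
  intro x x₀ hx
  by_contra hne
  obtain ⟨c, hc, δ, hδ, hiso⟩ := (hG x₀).exists_pos_mul_norm_sub_le (hinj x₀)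
  have hfar : ∀ t ∈ Icc (0 : ℝ) 1, ∀ z, z + t • G z = x₀ + t • G x₀ → z ≠ x₀ →
      δ ≤ ‖z - x₀‖ := by
    intro t ht z hz hzx
    by_contra! hlt
    have := hiso t ht z hlt
    rw [hz, sub_self, norm_zero] at this
    exact hzx (sub_eq_zero.1 (norm_le_zero_iff.1 (nonpos_of_mul_nonpos_right this hc)))
  set K := {p : ℝ × E | p.1 ∈ Icc (0 : ℝ) 1 ∧ δ ≤ ‖p.2 - x₀‖ ∧
    p.2 + p.1 • G p.2 = x₀ + p.1 • G x₀}
  have hGc : Continuous G := continuous_iff_continuousAt.2 fun x => (hG x).continuousAt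
  have hK : IsCompact K := by
    refine isCompact_of_isClosed_isBounded ?_ ?_
    · exact (isClosed_Icc.preimage continuous_fst).inter
        ((isClosed_le continuous_const (continuous_snd.sub continuous_const).norm).inter
        (isClosed_eq (continuous_snd.add (continuous_fst.smul (hGc.comp continuous_snd)))
          (continuous_const.add (continuous_fst.smul continuous_const))))
    · exact ((isBounded_Icc (0 : ℝ) 1).prod (isBounded_closedBall (x := x₀) (r := 2 * M))).subset
        fun p hp => ⟨hp.1, mem_closedBall_iff_norm.2 (norm_sub_le_of_add_smul_eq hM hp.1 hp.2.2)⟩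
  have h1 : (1, x) ∈ K := ⟨⟨zero_le_one, le_rfl⟩, hfar 1 ⟨zero_le_one, le_rfl⟩ x
    (by simpa using hx) hne, by simpa using hx⟩
  obtain ⟨⟨t₁, z₁⟩, ⟨ht₁, hδz₁, hz₁⟩, hmin⟩ :=
    hK.exists_isMinOn ⟨_, h1⟩ continuous_fst.continuousOn
  have ht₁pos : 0 < t₁ := by
    refine lt_of_le_of_ne ht₁.1 fun h => ?_
    subst h
    simp only [zero_smul, add_zero] at hz₁
    rw [hz₁, sub_self, norm_zero] at hδz₁
    linarith
  obtain ⟨t, ht, z, hz, heq⟩ := exists_lt_add_smul_eq hG hM hinj ⟨ht₁pos, ht₁.2⟩ hz₁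
    (hδ.trans_le hδz₁)
  have hzx : z ≠ x₀ := by
    rintro rfl
    rw [mem_ball_iff_norm'] at hz
    exact lt_irrefl _ hz
  have htK := isMinOn_iff.1 hmin (t, z)
    ⟨⟨ht.1, ht.2.le.trans ht₁.2⟩, hfar t ⟨ht.1, ht.2.le.trans ht₁.2⟩ z heq hzx, heq⟩
  exact (htK.trans_lt ht.2).false

theorem surjective_id_add_of_bounded : Surjective fun x => x + G x := by
  intro y
  have hM0 : 0 ≤ M := (norm_nonneg _).trans (hM 0)
  obtain ⟨z, -, hz⟩ := exists_mem_ball_eq_of_norm_lt_on_sphere (g := fun x => x + G x)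
    (fun x => (hasFDerivAt_id x).add (hG x))
    (fun x => LinearMap.injective_iff_surjective.1
      (one_smul ℝ (DG x) ▸ hinj x 1 ⟨zero_le_one, le_rfl⟩))
    (by linarith : (0 : ℝ) ≤ 2 * M + 1) (x₀ := y) (y := y) fun z hz => by
      rw [mem_sphere_iff_norm] at hz
      rw [add_sub_cancel_left, show z + G z - y = z - y + G z by abel]
      linarith [hM y, hM z, norm_sub_le_norm_add (z - y) (G z)]
  exact ⟨z, hz⟩

end FiniteDimensional

theorem bijective_id_add_of_forall_ne_smul {E : Type*} [NormedAddCommGroup E]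
    [InnerProductSpace ℝ E] [FiniteDimensional ℝ E] {G : E → E} {DG : E → E →L[ℝ] E} {M : ℝ}
    (hG : ∀ x, HasFDerivAt G (DG x) x) (hM : ∀ x, ‖G x‖ ≤ M)
    (heig : ∀ x, ∀ lam : ℝ, lam ≤ -1 → ∀ v : E, v ≠ 0 → DG x v ≠ lam • v) :
    Bijective fun x => x + G x :=
  have hinj x _ ht := (DG x).injective_id_add_smul (heig x) ht
  ⟨injective_id_add_of_bounded hG hM hinj, surjective_id_add_of_bounded hG hM hinj⟩

theorem HasFDerivAt.apply_mem_of_forall_mem {E H : Type*} [NormedAddCommGroup E]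
    [NormedSpace ℝ E] [NormedAddCommGroup H] [InnerProductSpace ℝ H] {f : E → H}
    {f' : E →L[ℝ] H} {x : E} (hf : HasFDerivAt f f' x) (S : Submodule ℝ H)
    [S.HasOrthogonalProjection] (hS : ∀ y, f y ∈ S) (v : E) : f' v ∈ S := by
  have hPf : HasFDerivAt f (S.starProjection ∘L f') x := by
    have := S.starProjection.hasFDerivAt.comp x hf
    simpa [Function.comp_def, Submodule.starProjection_eq_self_iff.2 (hS _)] using this
  rw [hf.unique hPf]
  exact S.starProjection_apply_mem _

theorem Submodule.bijective_id_add_of_bijective_restrict {R H : Type*} [Ring R]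
    [AddCommGroup H] [Module R H] (S : Submodule R H) {F : H → H} (hS : ∀ u, F u ∈ S)
    (G : H → S → S) (hG : ∀ c s, (G c s : H) = F (c + s))
    (hbij : ∀ c, Bijective fun s => s + G c s) :
    Bijective fun u => u + F u := by
  constructor
  · intro u v huv
    have huv' : u - v + F u = F v := by
      simp only at huv
      rw [sub_add_eq_add_sub, huv, add_sub_cancel_left]
    have hmem : u - v ∈ S := by
      rw [eq_sub_of_add_eq huv']
      exact S.sub_mem (hS v) (hS u)
    have := (hbij v).1 (a₁ := ⟨u - v, hmem⟩) (a₂ := 0)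
      (Subtype.ext (by simp [hG, huv']))
    exact sub_eq_zero.1 (congrArg Subtype.val this)
  · intro y
    obtain ⟨s, hs⟩ := (hbij y).2 0
    refine ⟨y + s, ?_⟩
    have := congrArg Subtype.val hs
    simp only [Submodule.coe_add, hG, ZeroMemClass.coe_zero] at this
    simp only [add_assoc, this, add_zero]

theorem stmt_1_general {H : Type*} [NormedAddCommGroup H] [InnerProductSpace ℝ H]
    (F : H → H) (DF : H → H →L[ℝ] H)
    (hdiff : ∀ u : H, HasFDerivAt F (DF u) u)
    (hfin : ∃ S : Submodule ℝ H, FiniteDimensional ℝ S ∧ ∀ u : H, F u ∈ S)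
    (hbd : Bornology.IsBounded (Set.range F))
    (heig : ∀ u : H, ∀ lam : ℝ, lam ≤ -1 → ∀ v : H, v ≠ 0 → DF u v ≠ lam • v) :
    Function.Bijective fun u : H => u + F u := by
  obtain ⟨S, hSfin, hSF⟩ := hfin
  obtain ⟨M, hM⟩ := isBounded_iff_forall_norm_le.1 hbd
  have hP : ∀ w ∈ S, (S.orthogonalProjectionOnto w : H) = w := fun _ hw =>
    Submodule.starProjection_eq_self_iff.2 hw
  have hDF : ∀ u w, DF u w ∈ S := fun u => (hdiff u).apply_mem_of_forall_mem S hSF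
  refine S.bijective_id_add_of_bijective_restrict hSF
    (fun c s => S.orthogonalProjectionOnto (F (c + s))) (fun c s => hP _ (hSF _)) fun c => ?_
  refine bijective_id_add_of_forall_ne_smul
    (DG := fun s => S.orthogonalProjectionOnto ∘L DF (c + s) ∘L S.subtypeL) (M := M)
    (fun s => ?_) (fun s => ?_) fun s lam hlam v hv heq => ?_
  · exact S.orthogonalProjectionOnto.hasFDerivAt.comp s
      ((hdiff _).comp s (S.subtypeL.hasFDerivAt.const_add c))
  · rw [Submodule.coe_norm, hP _ (hSF _)]
    exact hM _ (mem_range_self _)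
  · refine heig (c + s) lam hlam v (by simpa using hv) ?_
    simpa [hP _ (hDF _ _)] using congrArg Subtype.val heq

/-- If `F : H → H` is everywhere Fréchet differentiable, its range is contained
in a finite-dimensional subspace and is bounded, and for every `u` no real eigenvalue of the
derivative `DF u` lies in `(-∞, -1]`, then `u ↦ u + F u` is bijective. -/
theorem stmt_1 {H : Type*} [NormedAddCommGroup H] [InnerProductSpace ℝ H]
    [CompleteSpace H] [TopologicalSpace.SeparableSpace H]
    (F : H → H) (hcont : Continuous F) (DF : H → H →L[ℝ] H)
    (hdiff : ∀ u : H, HasFDerivAt F (DF u) u)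
    (hfin : ∃ S : Submodule ℝ H, FiniteDimensional ℝ S ∧ ∀ u : H, F u ∈ S)
    (hbd : Bornology.IsBounded (Set.range F))
    (heig : ∀ u : H, ∀ lam : ℝ, lam ≤ -1 → ∀ v : H, v ≠ 0 → DF u v ≠ lam • v) :
    Function.Bijective fun u : H => u + F u :=
  stmt_1_general F DF hdiff hfin hbd heig
end

section
/- Let H be a separable real Hilbert space, let u₀, w₀ ∈ H and b ∈ ℝ, and assume ⟨u₀, w₀⟩ > −1. Then the functional planar flow layer f : H → H defined by f(u) = u + tanh(⟨w₀, u⟩ + b)·u₀ is bijective, where tanh is the real hyperbolic tangent function. -/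
/-!
Applying the functional `⟪w₀, ·⟫ + b` to `u + tanh (⟪w₀, u⟫ + b) • u₀ = y` turns it into the scalar
equation `s + a * tanh s = ⟪w₀, y⟫ + b` for `s = ⟪w₀, u⟫ + b`, where `a = ⟪w₀, u₀⟫`. Since
`tanh' = 1 - tanh² ∈ (0, 1]`, the scalar map has positive derivative when `a > -1`, and it differs
from the identity by at most `|a|`, so it is a bijection of `ℝ`. Its unique solution `s` then
forces `u = y - tanh s • u₀`.
-/

open scoped RealInnerProductSpace
open Function Filter

namespace Real

theorem hasDerivAt_tanh (x : ℝ) : HasDerivAt tanh (1 - tanh x ^ 2) x := by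
  have hcosh : cosh x ≠ 0 := (cosh_pos x).ne'
  rw [show tanh = fun y => sinh y / cosh y from funext tanh_eq_sinh_div_cosh]
  refine ((hasDerivAt_sinh x).div (hasDerivAt_cosh x) hcosh).congr_deriv ?_
  field_simp

theorem continuous_tanh : Continuous tanh :=
  continuous_iff_continuousAt.2 fun x => (hasDerivAt_tanh x).continuousAt

theorem strictMono_add_mul_tanh {a : ℝ} (ha : -1 < a) : StrictMono fun t => t + a * tanh t :=
  strictMono_of_hasDerivAt_pos (fun t => (hasDerivAt_id t).add ((hasDerivAt_tanh t).const_mul a))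
    fun t => by nlinarith [tanh_sq_lt_one t, sq_nonneg (tanh t)]

theorem surjective_add_of_continuous_of_abs_le {g : ℝ → ℝ} (hg : Continuous g) {C : ℝ}
    (hC : ∀ t, |g t| ≤ C) : Surjective fun t => t + g t :=
  (continuous_id.add hg).surjective
    (tendsto_atTop_add_right_of_le _ (-C) tendsto_id fun t => (abs_le.1 (hC t)).1)
    (tendsto_atBot_add_right_of_ge _ C tendsto_id fun t => (abs_le.1 (hC t)).2)

theorem bijective_add_mul_tanh {a : ℝ} (ha : -1 < a) : Bijective fun t => t + a * tanh t :=
  ⟨(strictMono_add_mul_tanh ha).injective,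
    surjective_add_of_continuous_of_abs_le (continuous_const.mul continuous_tanh) (C := |a|)
      fun t => by
        rw [abs_mul]
        exact mul_le_of_le_one_right (abs_nonneg a) (abs_tanh_lt_one t).le⟩

end Real

theorem bijective_add_smul_of_bijective {R E : Type*} [CommRing R] [AddCommGroup E] [Module R E]
    (ℓ : E →ₗ[R] R) (φ : R → R) (v : E) (b : R)
    (hφ : Bijective fun t => t + ℓ v * φ t) :
    Bijective fun u => u + φ (ℓ u + b) • v := by
  have hℓ (u : E) : ℓ (u + φ (ℓ u + b) • v) + b = (ℓ u + b) + ℓ v * φ (ℓ u + b) := by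
    simp only [map_add, map_smul, smul_eq_mul]; ring
  refine ⟨fun u u' huu' => ?_, fun y => ?_⟩
  · have hlevel : ℓ u + b = ℓ u' + b := hφ.1 <| by
      simpa only [hℓ] using congrArg (fun x => ℓ x + b) huu'
    simpa only [hlevel, add_left_inj] using huu'
  · obtain ⟨t, ht⟩ := hφ.2 (ℓ y + b)
    have hlevel : ℓ (y - φ t • v) + b = t := by
      simp only [map_sub, map_smul, smul_eq_mul] at ht ⊢
      linear_combination -ht
    exact ⟨y - φ t • v, by simp only [hlevel, sub_add_cancel]⟩

theorem stmt_5_general {H : Type*} [NormedAddCommGroup H] [InnerProductSpace ℝ H]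
    (u₀ w₀ : H) (b : ℝ) (h : ⟪u₀, w₀⟫ > -1) :
    Function.Bijective fun u : H => u + Real.tanh (⟪w₀, u⟫ + b) • u₀ :=
  bijective_add_smul_of_bijective (innerₗ H w₀) Real.tanh u₀ b
    (Real.bijective_add_mul_tanh (by rwa [innerₗ_apply_apply, real_inner_comm]))

/-- The functional planar flow layer
`f(u) = u + tanh(⟨w₀,u⟩ + b) u₀` with `⟨u₀,w₀⟩ > −1` is bijective. -/
theorem stmt_5 {H : Type*} [NormedAddCommGroup H] [InnerProductSpace ℝ H]
    [CompleteSpace H] [TopologicalSpace.SeparableSpace H]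
    (u₀ w₀ : H) (b : ℝ) (h : ⟪u₀, w₀⟫ > -1) :
    Function.Bijective fun u : H => u + Real.tanh (⟪w₀, u⟫ + b) • u₀ :=
  stmt_5_general u₀ w₀ b h
end

section
/- Let H be a separable real Hilbert space, let u₀, w₀ ∈ H and b ∈ ℝ. Define f : H → H by f(u) = u + tanh(⟨w₀, u⟩ + b)·u₀. Then f is Fréchet differentiable at every u ∈ H with derivative Df(u)(v) = v + (1 − tanh(⟨w₀, u⟩ + b)²)·⟨w₀, v⟩·u₀, and if moreover ⟨u₀, w₀⟩ > −1, then for every u ∈ H every real eigenvalue of the bounded linear operator Df(u) is strictly positive. -/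
open scoped RealInnerProductSpace

/-!
`Df(u)` is the rank-one perturbation `v ↦ v + c ⟪w₀, v⟫ u₀` of the identity with
`c = 1 - tanh² ∈ (0, 1]`. It fixes every vector orthogonal to `w₀`, and pairing an eigenvector
not orthogonal to `w₀` with `w₀` forces the eigenvalue `1 + c ⟪w₀, u₀⟫ > 1 - c ≥ 0`.
-/

theorem Real.hasDerivAt_tanh_s6 (x : ℝ) : HasDerivAt Real.tanh (1 - Real.tanh x ^ 2) x := by
  have h := (Real.hasDerivAt_sinh x).div (Real.hasDerivAt_cosh x) (Real.cosh_pos x).ne'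
  have htanh : Real.sinh / Real.cosh = Real.tanh := by
    funext y
    exact (Real.tanh_eq_sinh_div_cosh y).symm
  rw [htanh] at h
  refine h.congr_deriv ?_
  rw [Real.tanh_eq_sinh_div_cosh]
  have := Real.cosh_sq_sub_sinh_sq x
  field_simp

section PlanarFlow

variable {H : Type*} [NormedAddCommGroup H] [InnerProductSpace ℝ H]

theorem hasFDerivAt_add_smul_comp_inner {σ : ℝ → ℝ} {σ' : ℝ} (u₀ w₀ : H) (b : ℝ) {u : H}
    (hσ : HasDerivAt σ σ' (⟪w₀, u⟫ + b)) :
    HasFDerivAt (fun u : H => u + σ (⟪w₀, u⟫ + b) • u₀)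
      (ContinuousLinearMap.id ℝ H + σ' • (innerSL ℝ w₀).smulRight u₀) u := by
  have hinner : HasFDerivAt (fun u : H => ⟪w₀, u⟫ + b) (innerSL ℝ w₀) u :=
    (innerSL ℝ w₀).hasFDerivAt.add_const b
  refine ((hasFDerivAt_id u).add ((hσ.comp_hasFDerivAt u hinner).smul_const u₀)).congr_fderiv ?_
  ext v
  simp only [add_apply, smul_apply, ContinuousLinearMap.smulRight_apply,
    ContinuousLinearMap.id_apply, innerSL_apply_apply, smul_smul, smul_eq_mul]

theorem eigenvalue_id_add_smul_smulRight {u w v : H} {c lam : ℝ} (hv : v ≠ 0)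
    (h : (ContinuousLinearMap.id ℝ H + c • (innerSL ℝ w).smulRight u) v = lam • v) :
    lam = 1 ∨ lam = 1 + c * ⟪w, u⟫ := by
  simp only [add_apply, smul_apply, ContinuousLinearMap.smulRight_apply,
    ContinuousLinearMap.id_apply, innerSL_apply_apply] at h
  by_cases hwv : ⟪w, v⟫ = 0
  · left
    rw [hwv, zero_smul, smul_zero, add_zero] at h
    have : (lam - 1) • v = 0 := by rw [sub_smul, one_smul, ← h, sub_self]
    linarith [(smul_eq_zero.mp this).resolve_right hv]
  · right
    have hw := congrArg (fun x => ⟪w, x⟫) h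
    simp only [inner_add_right, inner_smul_right] at hw
    have : ⟪w, v⟫ * (lam - (1 + c * ⟪w, u⟫)) = 0 := by linear_combination -hw
    linarith [(mul_eq_zero.mp this).resolve_left hwv]

theorem eigenvalue_pos_of_id_add_smul_smulRight {u w v : H} {c lam : ℝ} (hv : v ≠ 0)
    (hc₀ : 0 < c) (hc₁ : c ≤ 1) (huw : -1 < ⟪u, w⟫)
    (h : (ContinuousLinearMap.id ℝ H + c • (innerSL ℝ w).smulRight u) v = lam • v) :
    0 < lam := by
  rw [real_inner_comm] at huw
  rcases eigenvalue_id_add_smul_smulRight hv h with rfl | rfl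
  · exact one_pos
  · nlinarith

end PlanarFlow

theorem stmt_6_general {H : Type*} [NormedAddCommGroup H] [InnerProductSpace ℝ H]
    (u₀ w₀ : H) (b : ℝ) :
    (∀ u : H,
      HasFDerivAt (fun u : H => u + Real.tanh (⟪w₀, u⟫ + b) • u₀)
        (ContinuousLinearMap.id ℝ H +
          (1 - Real.tanh (⟪w₀, u⟫ + b) ^ 2) • (innerSL ℝ w₀).smulRight u₀) u) ∧
    (⟪u₀, w₀⟫ > -1 → ∀ (u : H) (lam : ℝ) (v : H), v ≠ 0 →
      (ContinuousLinearMap.id ℝ H +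
        (1 - Real.tanh (⟪w₀, u⟫ + b) ^ 2) • (innerSL ℝ w₀).smulRight u₀) v = lam • v →
      0 < lam) := by
  refine ⟨fun u => hasFDerivAt_add_smul_comp_inner u₀ w₀ b (Real.hasDerivAt_tanh_s6 _), ?_⟩
  intro huw u lam v hv h
  have hc₀ : 0 < 1 - Real.tanh (⟪w₀, u⟫ + b) ^ 2 := sub_pos.mpr (Real.tanh_sq_lt_one _)
  have hc₁ : 1 - Real.tanh (⟪w₀, u⟫ + b) ^ 2 ≤ 1 := sub_le_self _ (sq_nonneg _)
  exact eigenvalue_pos_of_id_add_smul_smulRight hv hc₀ hc₁ huw h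

/-- The functional planar flow layer `f(u) = u + tanh(⟨w₀,u⟩ + b) u₀` is
Fréchet differentiable with derivative `Df(u) v = v + (1 − tanh(⟨w₀,u⟩+b)²) ⟨w₀,v⟩ u₀`, and
if `⟨u₀,w₀⟩ > −1`, every real eigenvalue of `Df(u)` is strictly positive. -/
theorem stmt_6 {H : Type*} [NormedAddCommGroup H] [InnerProductSpace ℝ H]
    [CompleteSpace H] [TopologicalSpace.SeparableSpace H]
    (u₀ w₀ : H) (b : ℝ) :
    (∀ u : H,
      HasFDerivAt (fun u : H => u + Real.tanh (⟪w₀, u⟫ + b) • u₀)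
        (ContinuousLinearMap.id ℝ H +
          (1 - Real.tanh (⟪w₀, u⟫ + b) ^ 2) • (innerSL ℝ w₀).smulRight u₀) u) ∧
    (⟪u₀, w₀⟫ > -1 → ∀ (u : H) (lam : ℝ) (v : H), v ≠ 0 →
      (ContinuousLinearMap.id ℝ H +
        (1 - Real.tanh (⟪w₀, u⟫ + b) ^ 2) • (innerSL ℝ w₀).smulRight u₀) v = lam • v →
      0 < lam) :=
  stmt_6_general u₀ w₀ b
end

section
/- Let H be a separable real Hilbert space, let (φ₁, …, φ_M) be an orthonormal family in H, let R be an M×M real matrix and b ∈ ℝ^M. Define P : H → ℝ^M by P(u) = (⟨u, φ₁⟩, …, ⟨u, φ_M⟩) and Q : ℝ^M → H by Q(d) = Σ_{i=1}^M d_i φ_i. If no real eigenvalue of R lies in the interval (−∞, −1], then the functional projected transformation flow layer f : H → H defined by f(u) = u + Q(R(P(u) + b)) is bijective. -/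
open scoped RealInnerProductSpace

/-!
Write `f u = u + Q (g (P u))` with `g d = R (d + b)`. Since `P ∘ Q = id`, projecting gives
`P (f u) = h (P u)` for `h d = d + g d`, so `f` is a bijection as soon as `h` is: the
component `P u` is recovered through `h⁻¹`, and then `u` from `f u`. Here
`h d = (1 + R)(d + b) - b`, and `1 + R` is invertible because `-1` is not an eigenvalue of `R`.
-/

theorem Function.bijective_add_comp_of_leftInverse {H V : Type*} [AddGroup H] [AddGroup V]
    (P : H →+ V) {Q : V → H} (hPQ : Function.LeftInverse P Q) {g : V → V}
    (hg : Function.Bijective fun d => d + g d) :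
    Function.Bijective fun u => u + Q (g (P u)) := by
  have hP : ∀ u, P (u + Q (g (P u))) = P u + g (P u) := fun u => by rw [map_add, hPQ]
  refine ⟨fun u u' huu' => ?_, fun v => ?_⟩
  · have hPu : P u = P u' := hg.1 (by simpa only [hP] using congrArg P huu')
    simpa only [hPu, add_left_inj] using huu'
  · obtain ⟨d, hd⟩ := hg.2 (P v)
    have hPu : P (v - Q (g d)) = d := by
      rw [map_sub, hPQ, ← hd, add_sub_cancel_right]
    exact ⟨v - Q (g d), by simp only [hPu, sub_add_cancel]⟩

theorem Matrix.bijective_mulVec_one_add {n K : Type*} [Fintype n] [DecidableEq n] [Field K]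
    {R : Matrix n n K} (hR : ∀ x : n → K, x ≠ 0 → R.mulVec x ≠ -x) :
    Function.Bijective (1 + R).mulVec := by
  have hdet : (1 + R).det ≠ 0 := fun h => by
    obtain ⟨x, hx0, hx⟩ := Matrix.exists_mulVec_eq_zero_iff.2 h
    rw [Matrix.add_mulVec, Matrix.one_mulVec] at hx
    exact hR x hx0 (eq_neg_of_add_eq_zero_right hx)
  have hunit : IsUnit (1 + R) := (Matrix.isUnit_iff_isUnit_det _).2 hdet.isUnit
  exact ⟨Matrix.mulVec_injective_iff_isUnit.2 hunit, Matrix.mulVec_surjective_iff_isUnit.2 hunit⟩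

theorem Matrix.bijective_add_mulVec_add {n K : Type*} [Fintype n] [DecidableEq n] [Ring K]
    {R : Matrix n n K} (hR : Function.Bijective (1 + R).mulVec) (b : n → K) :
    Function.Bijective fun d => d + R.mulVec (d + b) := by
  have hsplit : (fun d => d + R.mulVec (d + b)) = (· - b) ∘ (1 + R).mulVec ∘ (· + b) := by
    ext d i
    simp only [Pi.add_apply, Function.comp_apply, Matrix.add_mulVec, Matrix.one_mulVec,
      Pi.sub_apply]
    abel
  rw [hsplit]
  exact (Equiv.subRight b).bijective.comp (hR.comp (Equiv.addRight b).bijective)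

def innerCoeffs {H ι : Type*} [NormedAddCommGroup H] [InnerProductSpace ℝ H] (φ : ι → H) :
    H →+ (ι → ℝ) :=
  AddMonoidHom.mk' (fun u j => ⟪u, φ j⟫) fun u v => by ext j; exact inner_add_left u v (φ j)

theorem Orthonormal.leftInverse_innerCoeffs {H ι : Type*} [NormedAddCommGroup H]
    [InnerProductSpace ℝ H] [Fintype ι] {φ : ι → H} (hφ : Orthonormal ℝ φ) :
    Function.LeftInverse (innerCoeffs φ) fun d => ∑ i, d i • φ i := fun d => by
  ext j
  exact hφ.inner_left_fintype d j

theorem stmt_7_general {H : Type*} [NormedAddCommGroup H] [InnerProductSpace ℝ H]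
    (M : ℕ) (φ : Fin M → H) (hφ : Orthonormal ℝ φ)
    (R : Matrix (Fin M) (Fin M) ℝ) (b : Fin M → ℝ)
    (heig : ∀ lam : ℝ, lam ≤ -1 → ∀ x : Fin M → ℝ, x ≠ 0 → R.mulVec x ≠ lam • x) :
    Function.Bijective fun u : H =>
      u + ∑ i : Fin M, R.mulVec (fun j => ⟪u, φ j⟫ + b j) i • φ i := by
  have hR : Function.Bijective (1 + R).mulVec :=
    Matrix.bijective_mulVec_one_add fun x hx => by
      simpa using heig (-1) le_rfl x hx
  exact Function.bijective_add_comp_of_leftInverse (innerCoeffs φ) hφ.leftInverse_innerCoeffs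
    (Matrix.bijective_add_mulVec_add hR b)

/-- The functional projected transformation flow layer
`f(u) = u + Q(R(P(u) + b))`, where `P(u) = (⟨u,φ₁⟩,…,⟨u,φ_M⟩)` and `Q(d) = ∑ dᵢ φᵢ` for an
orthonormal family `(φᵢ)`, is bijective provided no real eigenvalue of the matrix `R` lies
in `(-∞, -1]`. -/
theorem stmt_7 {H : Type*} [NormedAddCommGroup H] [InnerProductSpace ℝ H]
    [CompleteSpace H] [TopologicalSpace.SeparableSpace H]
    (M : ℕ) (φ : Fin M → H) (hφ : Orthonormal ℝ φ)
    (R : Matrix (Fin M) (Fin M) ℝ) (b : Fin M → ℝ)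
    (heig : ∀ lam : ℝ, lam ≤ -1 → ∀ x : Fin M → ℝ, x ≠ 0 → R.mulVec x ≠ lam • x) :
    Function.Bijective fun u : H =>
      u + ∑ i : Fin M, R.mulVec (fun j => ⟪u, φ j⟫ + b j) i • φ i :=
  stmt_7_general M φ hφ R b heig
end
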